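/- arXiv:1401.0099 — 3 statements merged into one kernel-verified Lean document; each statement's English description precedes it below -/
import Mathlib

section
/- If {W_x : x ∈ Y} is an abelian unitary system of size s on C^d, then there exists a unitary U and mutually orthogonal diagonal matrices D_x with all diagonal entries of modulus 1 and tr D_x = 0 such that W_x = U D_x U* for each x; moreover the (s+1) × d matrix H whose rows are the all-ones vector and the diagonals of the D_x satisfies H H* = d·I_{s+1} and |H_{jk}| = 1 for every entry, i.e., H is a partial complex Hadamard matrix. -/
open Matrix Module

/-!
Unitaries satisfy `W* = W⁻¹`, so a commuting family of unitaries also commutes with the adjoints,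
and the real and imaginary parts `ℜ W_x`, `ℑ W_x` form a commuting family of Hermitian matrices.
A joint orthonormal eigenbasis of that family gives one unitary `U` with `W_x = U D_x U*`,
`D_x` diagonal. Conjugation by `U` preserves unitarity, the trace and the form `tr (A* B)`,
so the `D_x` are unimodular, traceless and orthogonal. Adjoining `W = 1` (whose diagonal is the
all-ones row) keeps the system orthogonal with `tr (W* W) = d`, and for diagonal matrices
`tr (D_b* D_a)` is the inner product of the diagonals: this is `H H* = d I`.
-/

open ComplexStarModule in
theorem Commute.realPart_right {A : Type*} [Ring A] [StarRing A] [Algebra ℂ A] [StarModule ℂ A]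
    {x y : A} (h : Commute y x) (h' : Commute y (star x)) : Commute y (ℜ x : A) := by
  rw [realPart_apply_coe]
  exact (h.add_right h').smul_right _

open ComplexStarModule in
theorem Commute.imaginaryPart_right {A : Type*} [Ring A] [StarRing A] [Algebra ℂ A]
    [StarModule ℂ A] {x y : A} (h : Commute y x) (h' : Commute y (star x)) :
    Commute y (ℑ x : A) := by
  rw [imaginaryPart_apply_coe]
  exact ((h.sub_right h').smul_right _).smul_right _

theorem Commute.star_right_of_mem_unitary {R : Type*} [Monoid R] [StarMul R] {a u : R}
    (h : Commute a u) (hu : u ∈ unitary R) : Commute a (star u) :=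
  h.units_inv_right (u := Unitary.toUnits ⟨u, hu⟩)

theorem LinearMap.IsSymmetric.exists_orthonormalBasis_apply_eq_smul_of_commute
    {𝕜 E ι : Type*} [RCLike 𝕜] [NormedAddCommGroup E] [InnerProductSpace 𝕜 E]
    [FiniteDimensional 𝕜 E] [Finite ι] {n : ℕ} (hn : finrank 𝕜 E = n)
    {T : ι → E →ₗ[𝕜] E} (hT : ∀ i, (T i).IsSymmetric) (hC : ∀ i j, Commute (T i) (T j)) :
    ∃ (b : OrthonormalBasis (Fin n) 𝕜 E) (χ : Fin n → ι → 𝕜), ∀ i j, T i (b j) = χ j i • b j := by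
  classical
  let S := {χ : ι → 𝕜 // ⨅ i, End.eigenspace (T i) (χ i) ≠ ⊥}
  have : Finite S := Finite.of_injective (β := ∀ i, End.Eigenvalues (T i))
    (fun χ i => ⟨χ.1 i, fun h => χ.2 (eq_bot_iff.mpr ((iInf_le _ i).trans h.le))⟩)
    fun χ₁ χ₂ h => Subtype.ext <| funext fun i => congr(($h i).1)
  have : Fintype S := Fintype.ofFinite S
  let V : S → Submodule 𝕜 E := fun χ => ⨅ i, End.eigenspace (T i) (χ.1 i)
  have hO : OrthogonalFamily 𝕜 (fun χ => V χ) (fun χ => (V χ).subtypeₗᵢ) :=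
    (orthogonalFamily_iInf_eigenspaces hT).comp Subtype.val_injective
  have hV : DirectSum.IsInternal V := by
    rw [hO.isInternal_iff, ← Submodule.top_orthogonal_eq_bot,
      ← iSup_iInf_eq_top_of_commute hT fun i j _ => hC i j]
    exact congrArg _ (iSup_ne_bot_subtype _)
  refine ⟨hV.subordinateOrthonormalBasis hn hO,
    fun j => (hV.subordinateOrthonormalBasisIndex hn j hO).1, fun i j => ?_⟩
  exact End.mem_eigenspace_iff.mp
    ((Submodule.mem_iInf _).mp (hV.subordinateOrthonormalBasis_subordinate hn j hO) i)

namespace Matrix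

variable {n : Type*} [Fintype n] [DecidableEq n]

theorem trace_star_mul_mul_of_mem_unitaryGroup {R : Type*} [CommRing R] [StarRing R]
    {U : Matrix n n R} (hU : U ∈ unitaryGroup n R) (A : Matrix n n R) :
    trace (star U * A * U) = trace A := by
  rw [trace_mul_cycle, Unitary.mul_star_self_of_mem hU, one_mul]

theorem conjTranspose_star_mul_mul_mul_of_mem_unitaryGroup {R : Type*} [CommRing R] [StarRing R]
    {U : Matrix n n R} (hU : U ∈ unitaryGroup n R) (A B : Matrix n n R) :
    (star U * A * U)ᴴ * (star U * B * U) = star U * (Aᴴ * B) * U := by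
  simp only [← star_eq_conjTranspose, star_mul, star_star, mul_assoc]
  rw [← mul_assoc U, Unitary.mul_star_self_of_mem hU, one_mul]

theorem norm_eq_one_of_diagonal_mem_unitaryGroup {𝕜 : Type*} [RCLike 𝕜] {d : n → 𝕜}
    (hd : diagonal d ∈ unitaryGroup n 𝕜) (j : n) : ‖d j‖ = 1 := by
  have h := congr_fun₂ (mem_unitaryGroup_iff'.mp hd) j j
  simp only [star_eq_conjTranspose, diagonal_conjTranspose, diagonal_mul_diagonal,
    diagonal_apply_eq, one_apply_eq, Pi.star_apply, RCLike.star_def, RCLike.conj_mul] at h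
  exact_mod_cast (pow_eq_one_iff_of_nonneg (norm_nonneg _) two_ne_zero).mp (by exact_mod_cast h)

theorem exists_unitary_diagonal_of_commute_isHermitian {𝕜 ι : Type*} [RCLike 𝕜] [Finite ι]
    {A : ι → Matrix n n 𝕜} (hA : ∀ i, (A i).IsHermitian) (hC : ∀ i j, Commute (A i) (A j)) :
    ∃ U ∈ unitaryGroup n 𝕜, ∃ χ : ι → n → 𝕜, ∀ i, A i = U * diagonal (χ i) * star U := by
  have hT : ∀ i, (toEuclideanLin (A i)).IsSymmetric :=
    fun i => isSymmetric_toEuclideanLin_iff.mpr (hA i)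
  have hTC : ∀ i j, Commute (toEuclideanLin (A i)) (toEuclideanLin (A j)) := fun i j => by
    simpa only [Commute, SemiconjBy, Module.End.mul_eq_comp, toLpLin_mul_same]
      using congr(toLpLin 2 2 $((hC i j).eq))
  obtain ⟨b, χ, hb⟩ := LinearMap.IsSymmetric.exists_orthonormalBasis_apply_eq_smul_of_commute
    finrank_euclideanSpace hT hTC
  obtain ⟨e⟩ : Nonempty (Fin (Fintype.card n) ≃ n) := ⟨(Fintype.equivFin n).symm⟩
  let U := (EuclideanSpace.basisFun n 𝕜).toBasis.toMatrix (b.reindex e).toBasis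
  have hU : U ∈ unitaryGroup n 𝕜 :=
    (EuclideanSpace.basisFun n 𝕜).toMatrix_orthonormalBasis_mem_unitary (b.reindex e)
  refine ⟨U, hU, fun i k => χ (e.symm k) i, fun i => ?_⟩
  have hAU : A i * U = U * diagonal (fun k => χ (e.symm k) i) := by
    ext k l
    have := congr(WithLp.ofLp $(hb i (e.symm l)) k)
    rw [mul_diagonal, mul_comm]
    simpa [U, mul_apply, mulVec, dotProduct, Basis.toMatrix_apply] using this
  rw [← hAU, mul_assoc, Unitary.mul_star_self_of_mem hU, mul_one]

open ComplexStarModule in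
theorem exists_unitary_diagonal_of_commute_of_commute_star {ι : Type*} [Finite ι]
    {A : ι → Matrix n n ℂ} (hC : ∀ i j, Commute (A i) (A j))
    (hC' : ∀ i j, Commute (A i) (star (A j))) :
    ∃ U ∈ unitaryGroup n ℂ, ∃ μ : ι → n → ℂ, ∀ i, A i = U * diagonal (μ i) * star U := by
  let B : ι ⊕ ι → Matrix n n ℂ := Sum.elim (fun i => ℜ (A i)) (fun i => ℑ (A i))
  have hB : ∀ p, (B p).IsHermitian := by
    rintro (i | i)
    · exact (ℜ (A i)).2.isHermitian
    · exact (ℑ (A i)).2.isHermitian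
  have hAB : ∀ i p, Commute (A i) (B p) ∧ Commute (star (A i)) (B p) := by
    have hA'A : ∀ i j, Commute (star (A i)) (A j) := fun i j => commute_star_comm.mpr (hC' i j)
    have hA'A' : ∀ i j, Commute (star (A i)) (star (A j)) :=
      fun i j => commute_star_star.mpr (hC i j)
    rintro i (j | j)
    · exact ⟨(hC i j).realPart_right (hC' i j), (hA'A i j).realPart_right (hA'A' i j)⟩
    · exact ⟨(hC i j).imaginaryPart_right (hC' i j), (hA'A i j).imaginaryPart_right (hA'A' i j)⟩
  have hBB : ∀ p q, Commute (B p) (B q) := by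
    rintro p (j | j)
    · exact (hAB j p).1.symm.realPart_right (hAB j p).2.symm
    · exact (hAB j p).1.symm.imaginaryPart_right (hAB j p).2.symm
  obtain ⟨U, hU, χ, hχ⟩ := exists_unitary_diagonal_of_commute_isHermitian hB hBB
  refine ⟨U, hU, fun i => χ (.inl i) + Complex.I • χ (.inr i), fun i => ?_⟩
  calc A i = B (.inl i) + Complex.I • B (.inr i) := (realPart_add_I_smul_imaginaryPart _).symm
    _ = _ := by
      rw [hχ, hχ, ← Matrix.smul_mul, ← Matrix.mul_smul, ← add_mul, ← mul_add, ← diagonal_smul,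
        diagonal_add]
      rfl

theorem trace_conjTranspose_mul_optionElim {R Y : Type*} [CommRing R] [StarRing R]
    [DecidableEq Y] {W : Y → Matrix n n R} (hunit : ∀ y, W y ∈ unitaryGroup n R)
    (htr : ∀ y, trace (W y) = 0)
    (horth : ∀ x y, x ≠ y → trace ((W x)ᴴ * W y) = 0) (a b : Option Y) :
    trace ((a.elim 1 W)ᴴ * b.elim 1 W) = if a = b then (Fintype.card n : R) else 0 := by
  rcases a with _ | x <;> rcases b with _ | y
  · simp
  · simp [htr]
  · simp [trace_conjTranspose, htr]
  · by_cases hxy : x = y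
    · subst hxy
      simp [← star_eq_conjTranspose, Unitary.star_mul_self_of_mem (hunit x)]
    · simp [hxy, horth x y hxy]

end Matrix

theorem stmt3_general {d : ℕ} {Y : Type*} [Fintype Y] [DecidableEq Y]
    (W : Y → Matrix (Fin d) (Fin d) ℂ)
    (hunit : ∀ y, W y ∈ Matrix.unitaryGroup (Fin d) ℂ)
    (htr : ∀ y, Matrix.trace (W y) = 0)
    (horth : ∀ x y, x ≠ y → Matrix.trace ((W x)ᴴ * W y) = 0)
    (hcomm : ∀ x y, W x * W y = W y * W x) :
    ∃ U ∈ Matrix.unitaryGroup (Fin d) ℂ, ∃ D : Y → Matrix (Fin d) (Fin d) ℂ,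
      (∀ x, (D x).IsDiag) ∧
      (∀ x j, ‖D x j j‖ = 1) ∧
      (∀ x, Matrix.trace (D x) = 0) ∧
      (∀ x y, x ≠ y → Matrix.trace ((D x)ᴴ * D y) = 0) ∧
      (∀ x, W x = U * D x * Uᴴ) ∧
      ∃ H : Option Y → Fin d → ℂ,
        (∀ j, H none j = 1) ∧
        (∀ x j, H (some x) j = D x j j) ∧
        (∀ a j, ‖H a j‖ = 1) ∧
        (∀ a b, ∑ j, H a j * star (H b j) = if a = b then (d : ℂ) else 0) := by
  obtain ⟨U, hU, μ, hWμ⟩ := exists_unitary_diagonal_of_commute_of_commute_star hcomm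
    fun x y => Commute.star_right_of_mem_unitary (hcomm x y) (hunit y)
  let W' : Option Y → Matrix (Fin d) (Fin d) ℂ := fun a => a.elim 1 W
  let H : Option Y → Fin d → ℂ := fun a => a.elim 1 μ
  have hHW : ∀ a, diagonal (H a) = star U * W' a * U := by
    rintro (_ | x)
    · simp [W', H, Unitary.star_mul_self_of_mem hU]
    · calc diagonal (μ x) = star U * U * diagonal (μ x) * (star U * U) := by
            rw [Unitary.star_mul_self_of_mem hU, one_mul, mul_one]
        _ = star U * W x * U := by rw [hWμ x]; simp only [mul_assoc]
  have hH_norm : ∀ a j, ‖H a j‖ = 1 := by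
    refine fun a => norm_eq_one_of_diagonal_mem_unitaryGroup ?_
    rw [hHW]
    refine mul_mem (mul_mem (Unitary.star_mem hU) ?_) hU
    rcases a with _ | x
    exacts [one_mem _, hunit x]
  have hH_trace : ∀ a b,
      trace ((diagonal (H a))ᴴ * diagonal (H b)) = if a = b then (d : ℂ) else 0 := by
    intro a b
    rw [hHW, hHW, conjTranspose_star_mul_mul_mul_of_mem_unitaryGroup hU,
      trace_star_mul_mul_of_mem_unitaryGroup hU,
      trace_conjTranspose_mul_optionElim hunit htr horth, Fintype.card_fin]
  refine ⟨U, hU, fun x => diagonal (H (some x)), fun x => isDiag_diagonal _,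
    fun x => by simpa using hH_norm (some x), fun x => ?_, fun x y hxy => ?_, hWμ,
    H, fun _ => rfl, fun _ _ => by simp, hH_norm, fun a b => ?_⟩
  · simpa [H] using hH_trace none (some x)
  · simpa [hxy] using hH_trace (some x) (some y)
  · simpa [trace_diagonal, diagonal_conjTranspose, mul_comm, eq_comm] using hH_trace b a

/-- An abelian unitary system is simultaneously diagonalizable by a unitary, with
traceless mutually orthogonal unimodular-diagonal matrices; adding the all-ones row
to the diagonals yields a partial complex Hadamard matrix. -/
theorem stmt3 {d : ℕ} (hd : 2 ≤ d) {Y : Type*} [Fintype Y] [DecidableEq Y] [Nonempty Y]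
    (W : Y → Matrix (Fin d) (Fin d) ℂ)
    (hunit : ∀ y, W y ∈ Matrix.unitaryGroup (Fin d) ℂ)
    (htr : ∀ y, Matrix.trace (W y) = 0)
    (horth : ∀ x y, x ≠ y → Matrix.trace ((W x)ᴴ * W y) = 0)
    (hcomm : ∀ x y, W x * W y = W y * W x) :
    ∃ U ∈ Matrix.unitaryGroup (Fin d) ℂ, ∃ D : Y → Matrix (Fin d) (Fin d) ℂ,
      (∀ x, (D x).IsDiag) ∧
      (∀ x j, ‖D x j j‖ = 1) ∧
      (∀ x, Matrix.trace (D x) = 0) ∧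
      (∀ x y, x ≠ y → Matrix.trace ((D x)ᴴ * D y) = 0) ∧
      (∀ x, W x = U * D x * Uᴴ) ∧
      ∃ H : Option Y → Fin d → ℂ,
        (∀ j, H none j = 1) ∧
        (∀ x j, H (some x) j = D x j j) ∧
        (∀ a j, ‖H a j‖ = 1) ∧
        (∀ a b, ∑ j, H a j * star (H b j) = if a = b then (d : ℂ) else 0) :=
  stmt3_general W hunit htr horth hcomm
end

section
/- Two unitary bases U and U′ on a d-dimensional Hilbert space are equivalent (there exist unitaries V₁, V₂ and a bijection x ↦ x′ of X with U′_{x′} = V₁ U_x V₂) if and only if for some tag T = (x₀, U_{x₀}, W) associated to U and some tag T′ = (x₀′, U′_{x₀′}, W′) associated to U′, the unitary systems W and W′ are collectively unitarily equivalent (there is a unitary V and a bijection with W′_{x′} = V* W_x V for all x ≠ x₀). -/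
/-!
Since `U x = U x₀ * W x`, the basis is recovered from a tag. If `U' (g x) = V₁ * U x * V₂`, the
left factor `V₁` cancels in `(U' (g x₀))ᴴ * U' (g x)` and `V₂` becomes a conjugation. Conversely,
if `W' (g x) = Vᴴ * W x * V`, extending `g` by `x₀ ↦ x₀'` gives
`U' (g x) = (U' x₀' * Vᴴ * (U x₀)ᴴ) * U x * V` for every `x`, including `x₀`.
-/

open Matrix

section StarMonoid

variable {R : Type*} [Monoid R] [StarMul R]

theorem star_mul_mul_conj_of_mem_unitary {V₁ : R} (hV₁ : V₁ ∈ unitary R) (V₂ a b : R) :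
    star (V₁ * a * V₂) * (V₁ * b * V₂) = star V₂ * (star a * b) * V₂ := by
  simp only [star_mul, mul_assoc]
  rw [← mul_assoc (star V₁), Unitary.star_mul_self_of_mem hV₁, one_mul]

theorem eq_mul_mul_of_star_mul_eq {a a' b b' V : R} (ha' : a' ∈ unitary R)
    (h : star a' * b' = star V * (star a * b) * V) : b' = a' * star V * star a * b * V :=
  calc b' = a' * (star a' * b') := by rw [← mul_assoc, Unitary.mul_star_self_of_mem ha', one_mul]
    _ = a' * star V * star a * b * V := by rw [h]; simp only [mul_assoc]

theorem eq_mul_mul_self_of_mem_unitary {a V : R} (ha : a ∈ unitary R) (hV : V ∈ unitary R)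
    (a' : R) : a' = a' * star V * star a * a * V := by
  rw [mul_assoc (a' * star V), Unitary.star_mul_self_of_mem ha, mul_one, mul_assoc,
    Unitary.star_mul_self_of_mem hV, mul_one]

end StarMonoid

theorem stmt10_general {d : ℕ} (hd : 2 ≤ d) {X : Type*} [Fintype X] [DecidableEq X]
    (hX : Fintype.card X = d ^ 2)
    (U U' : X → Matrix (Fin d) (Fin d) ℂ)
    (hunit : ∀ x, U x ∈ Matrix.unitaryGroup (Fin d) ℂ)
    (hunit' : ∀ x, U' x ∈ Matrix.unitaryGroup (Fin d) ℂ) :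
    (∃ V₁ ∈ Matrix.unitaryGroup (Fin d) ℂ, ∃ V₂ ∈ Matrix.unitaryGroup (Fin d) ℂ,
      ∃ g : X ≃ X, ∀ x, U' (g x) = V₁ * U x * V₂) ↔
    (∃ x₀ x₀' : X, ∃ V ∈ Matrix.unitaryGroup (Fin d) ℂ,
      ∃ g : {x : X // x ≠ x₀} ≃ {x : X // x ≠ x₀'},
        ∀ x : {x : X // x ≠ x₀},
          (U' x₀')ᴴ * U' (g x) = Vᴴ * ((U x₀)ᴴ * U (x : X)) * V) := by
  simp only [← star_eq_conjTranspose]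
  constructor
  · rintro ⟨V₁, hV₁, V₂, hV₂, g, hg⟩
    obtain ⟨x₀⟩ : Nonempty X := Fintype.card_pos_iff.mp (by rw [hX]; exact pow_pos (by omega) 2)
    refine ⟨x₀, g x₀, V₂, hV₂, g.subtypeEquiv fun _ => g.injective.ne_iff.symm, fun x => ?_⟩
    rw [Equiv.subtypeEquiv_apply, hg, hg]
    exact star_mul_mul_conj_of_mem_unitary hV₁ V₂ _ _
  · rintro ⟨x₀, x₀', V, hV, g, hg⟩
    refine ⟨U' x₀' * star V * star (U x₀),
      mul_mem (mul_mem (hunit' x₀') (Unitary.star_mem hV)) (Unitary.star_mem (hunit x₀)), V, hV,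
      (Equiv.optionSubtypeNe x₀).symm.trans (g.optionCongr.trans (Equiv.optionSubtypeNe x₀')),
      fun x => ?_⟩
    by_cases hx : x = x₀
    · subst hx
      simpa [Equiv.optionSubtypeNe_symm_self] using
        eq_mul_mul_self_of_mem_unitary (hunit x) hV (U' x₀')
    · simpa [Equiv.optionSubtypeNe_symm_of_ne hx] using
        eq_mul_mul_of_star_mul_eq (hunit' x₀') (hg ⟨x, hx⟩)

/-- Two unitary bases are equivalent iff for some associated tags the underlying
unitary systems are collectively unitarily equivalent. -/
theorem stmt10 {d : ℕ} (hd : 2 ≤ d) {X : Type*} [Fintype X] [DecidableEq X]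
    (hX : Fintype.card X = d ^ 2)
    (U U' : X → Matrix (Fin d) (Fin d) ℂ)
    (hunit : ∀ x, U x ∈ Matrix.unitaryGroup (Fin d) ℂ)
    (hunit' : ∀ x, U' x ∈ Matrix.unitaryGroup (Fin d) ℂ)
    (horth : ∀ x y, Matrix.trace ((U x)ᴴ * U y) = if x = y then (d : ℂ) else 0)
    (horth' : ∀ x y, Matrix.trace ((U' x)ᴴ * U' y) = if x = y then (d : ℂ) else 0) :
    (∃ V₁ ∈ Matrix.unitaryGroup (Fin d) ℂ, ∃ V₂ ∈ Matrix.unitaryGroup (Fin d) ℂ,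
      ∃ g : X ≃ X, ∀ x, U' (g x) = V₁ * U x * V₂) ↔
    (∃ x₀ x₀' : X, ∃ V ∈ Matrix.unitaryGroup (Fin d) ℂ,
      ∃ g : {x : X // x ≠ x₀} ≃ {x : X // x ≠ x₀'},
        ∀ x : {x : X // x ≠ x₀},
          (U' x₀')ᴴ * U' (g x) = Vᴴ * ((U x₀)ᴴ * U (x : X)) * V) :=
  stmt10_general hd hX U U' hunit hunit'
end

section
/- For the right-division latin square a·b = a b⁻¹ on a group G, the Latin criss-cross condition 'n·(n′·k) = n′·(n·k) for all k ∈ G' holds if and only if n n′ = n′ n, (n′ n⁻¹)² = e, and n′ n⁻¹ lies in the center Z(G). In particular, if Z(G) is trivial then the condition forces n = n′. -/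
/-!
Put `c = n' n⁻¹`. Substituting `m = n k n⁻¹`, the criss-cross condition reads `m c⁻¹ = c m` for
all `m`. Taking `m = 1` gives `c⁻¹ = c`, and then the condition says exactly that `c` is central.
A central `c` commutes with `n`, hence so does `n' = c n`.
-/

section

variable {G : Type*} [Group G]

theorem forall_mul_inv_eq_mul_iff {c : G} :
    (∀ m : G, m * c⁻¹ = c * m) ↔ c ^ 2 = 1 ∧ c ∈ Subgroup.center G := by
  have inv_eq_iff : c⁻¹ = c ↔ c ^ 2 = 1 := by
    rw [sq, mul_eq_one_iff_eq_inv, eq_comm]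
  constructor
  · intro h
    have hinv : c⁻¹ = c := by simpa using h 1
    refine ⟨inv_eq_iff.1 hinv, Subgroup.mem_center_iff.2 fun m => ?_⟩
    simpa only [hinv] using h m
  · rintro ⟨hsq, hc⟩ m
    rw [inv_eq_iff.2 hsq]
    exact Subgroup.mem_center_iff.1 hc m

theorem forall_mul_mul_inv_inv_comm_iff (n n' : G) :
    (∀ k : G, n * (n' * k⁻¹)⁻¹ = n' * (n * k⁻¹)⁻¹) ↔
      ∀ m : G, m * (n' * n⁻¹)⁻¹ = n' * n⁻¹ * m := by
  refine Iff.trans (forall_congr' fun k => ?_) (MulAut.conj n).toEquiv.forall_congr_right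
  rw [show n * (n' * k⁻¹)⁻¹ = n * k * n⁻¹ * (n' * n⁻¹)⁻¹ by group,
    show n' * (n * k⁻¹)⁻¹ = n' * n⁻¹ * (n * k * n⁻¹) by group]
  rfl

theorem mul_comm_of_mul_inv_mem_center {n n' : G} (h : n' * n⁻¹ ∈ Subgroup.center G) :
    n * n' = n' * n := by
  calc n * n' = n * (n' * n⁻¹) * n := by group
    _ = n' * n⁻¹ * n * n := by rw [Subgroup.mem_center_iff.1 h n]
    _ = n' * n := by group

end

/-- Latin criss-cross for the right-division latin square `λ(a,b) = a b⁻¹`: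
`λ(n, λ(n', k)) = λ(n', λ(n, k))` for all `k` iff `n n' = n' n`, `(n' n⁻¹)² = e`
and `n' n⁻¹ ∈ Z(G)`. If the center is trivial, the condition forces `n = n'`. -/
theorem stmt17 {G : Type*} [Group G] (n n' : G) :
    ((∀ k : G, n * (n' * k⁻¹)⁻¹ = n' * (n * k⁻¹)⁻¹) ↔
      (n * n' = n' * n ∧ (n' * n⁻¹) ^ 2 = 1 ∧ n' * n⁻¹ ∈ Subgroup.center G)) ∧
    (Subgroup.center G = ⊥ →
      (∀ k : G, n * (n' * k⁻¹)⁻¹ = n' * (n * k⁻¹)⁻¹) → n = n') := by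
  have key : (∀ k : G, n * (n' * k⁻¹)⁻¹ = n' * (n * k⁻¹)⁻¹) ↔
      (n * n' = n' * n ∧ (n' * n⁻¹) ^ 2 = 1 ∧ n' * n⁻¹ ∈ Subgroup.center G) := by
    rw [forall_mul_mul_inv_inv_comm_iff, forall_mul_inv_eq_mul_iff]
    exact ⟨fun h => ⟨mul_comm_of_mul_inv_mem_center h.2, h⟩, And.right⟩
  refine ⟨key, fun hbot h => ?_⟩
  have hc := (key.1 h).2.2
  rw [hbot, Subgroup.mem_bot, mul_inv_eq_one] at hc
  exact hc.symm
end
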